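/- arXiv:0905.2094 — 7 statements merged into one kernel-verified Lean document; each statement's English description precedes it below -/
import Mathlib

section
/- For positive reals a, b, c, d, the identity L² − 4a²S² = (a²/4)(−a² + b² + c² + d² + 2bcd/a)² holds, where L² = (ab+cd)(ac+bd)(ad+bc), s = (a+b+c+d)/2, and S² = (s−a)(s−b)(s−c)(s−d). In particular L² − 4a²S² ≥ 0. -/
/-! Clearing the denominators `2` in `s` and `a` in `2bcd/a` turns the claim into the polynomial
identity `4 L² - a² (-a+b+c+d)(a-b+c+d)(a+b-c+d)(a+b+c-d) = (a (-a² + b² + c² + d²) + 2bcd)²`,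
whose right-hand side is a square. -/

theorem four_mul_prod_sub_sq_mul_prod_eq_sq {R : Type*} [CommRing R] (a b c d : R) :
    4 * ((a*b + c*d) * (a*c + b*d) * (a*d + b*c))
      - a^2 * ((-a + b + c + d) * (a - b + c + d) * (a + b - c + d) * (a + b + c - d))
      = (a * (-a^2 + b^2 + c^2 + d^2) + 2*b*c*d)^2 := by
  ring

theorem stmt_2_general (a b c d : ℝ) (ha : 0 < a)
    (L2 S2 s : ℝ) (hL2 : L2 = (a*b + c*d) * (a*c + b*d) * (a*d + b*c))
    (hs : s = (a + b + c + d) / 2)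
    (hS2 : S2 = (s - a) * (s - b) * (s - c) * (s - d)) :
    L2 - 4 * a^2 * S2 = (a^2 / 4) * (-a^2 + b^2 + c^2 + d^2 + 2*b*c*d/a)^2 ∧
    0 ≤ L2 - 4 * a^2 * S2 := by
  have key : L2 - 4 * a^2 * S2 = (a * (-a^2 + b^2 + c^2 + d^2) + 2*b*c*d)^2 / 4 := by
    subst hL2 hS2 hs
    linear_combination (1 / 4 : ℝ) * four_mul_prod_sub_sq_mul_prod_eq_sq a b c d
  refine ⟨?_, key ▸ by positivity⟩
  rw [key]
  field_simp

theorem stmt_2 (a b c d : ℝ) (ha : 0 < a) (hb : 0 < b) (hc : 0 < c) (hd : 0 < d)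
    (L2 S2 s : ℝ) (hL2 : L2 = (a*b + c*d) * (a*c + b*d) * (a*d + b*c))
    (hs : s = (a + b + c + d) / 2)
    (hS2 : S2 = (s - a) * (s - b) * (s - c) * (s - d)) :
    L2 - 4 * a^2 * S2 = (a^2 / 4) * (-a^2 + b^2 + c^2 + d^2 + 2*b*c*d/a)^2 ∧
    0 ≤ L2 - 4 * a^2 * S2 :=
  stmt_2_general a b c d ha L2 S2 s hL2 hs hS2
end

section
/- For positive reals a, b, c, d with S² = (s−a)(s−b)(s−c)(s−d) > 0 where s = (a+b+c+d)/2, and L² = (ab+cd)(ac+bd)(ad+bc), we have L²/(4S²) ≥ a², L²/(4S²) ≥ b², L²/(4S²) ≥ c², and L²/(4S²) ≥ d². -/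
theorem stmt_3 (a b c d : ℝ) (ha : 0 < a) (hb : 0 < b) (hc : 0 < c) (hd : 0 < d)
    (L2 S2 s : ℝ) (hs : s = (a + b + c + d) / 2)
    (hS2 : S2 = (s - a) * (s - b) * (s - c) * (s - d))
    (hL2 : L2 = (a*b + c*d) * (a*c + b*d) * (a*d + b*c))
    (hSpos : 0 < S2) :
    L2 / (4 * S2) ≥ a^2 ∧ L2 / (4 * S2) ≥ b^2 ∧ L2 / (4 * S2) ≥ c^2 ∧ L2 / (4 * S2) ≥ d^2 := by
  subst hs hS2 hL2
  have h4 : (0:ℝ) < 4 * ((((a+b+c+d)/2) - a) * (((a+b+c+d)/2) - b) * (((a+b+c+d)/2) - c) * (((a+b+c+d)/2) - d)) := by linarith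
  refine ⟨?_, ?_, ?_, ?_⟩ <;> rw [ge_iff_le, le_div_iff₀ h4]
  · nlinarith [sq_nonneg (a^3 - a*b^2 - a*c^2 - a*d^2 - 2*b*c*d)]
  · nlinarith [sq_nonneg (b^3 - b*a^2 - b*c^2 - b*d^2 - 2*a*c*d)]
  · nlinarith [sq_nonneg (c^3 - c*a^2 - c*b^2 - c*d^2 - 2*a*b*d)]
  · nlinarith [sq_nonneg (d^3 - d*a^2 - d*b^2 - d*c^2 - 2*a*b*c)]
end

section
/- For positive reals a, b, c, d, the identity L'² − 4a²S'² = (a²/4)(−a² + b² + c² + d² − 2bcd/a)² holds, where L'² = (cd−ab)(bd−ac)(bc−ad) and S'² = (1/16)(a+b+c+d)(a+b−c−d)(a−b+c−d)(−a+b+c−d). In particular L'² − 4a²S'² ≥ 0. -/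
/-!
Clearing the denominator `a`, the claim becomes the polynomial identity
`4 L'² - a² (16 S'²) = (a (-a² + b² + c² + d²) - 2bcd)²`, valid in any commutative ring;
nonnegativity is then immediate since the right side is a square.
-/

theorem four_mul_prod_sub_sq_mul_prod {R : Type*} [CommRing R] (a b c d : R) :
    4 * ((c*d - a*b) * (b*d - a*c) * (b*c - a*d))
      - a^2 * ((a + b + c + d) * (a + b - c - d) * (a - b + c - d) * (-a + b + c - d))
      = (a * (-a^2 + b^2 + c^2 + d^2) - 2*b*c*d)^2 := by
  ring

theorem stmt_4_general (a b c d : ℝ) (ha : 0 < a)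
    (L2' S2' : ℝ) (hL2' : L2' = (c*d - a*b) * (b*d - a*c) * (b*c - a*d))
    (hS2' : S2' = (1/16) * (a + b + c + d) * (a + b - c - d) * (a - b + c - d) * (-a + b + c - d)) :
    L2' - 4 * a^2 * S2' = (a^2 / 4) * (-a^2 + b^2 + c^2 + d^2 - 2*b*c*d/a)^2 ∧
    0 ≤ L2' - 4 * a^2 * S2' := by
  have key : L2' - 4 * a^2 * S2' = (a^2 / 4) * (-a^2 + b^2 + c^2 + d^2 - 2*b*c*d/a)^2 := by
    have hsq : a^2 * (-a^2 + b^2 + c^2 + d^2 - 2*b*c*d/a)^2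
        = (a * (-a^2 + b^2 + c^2 + d^2) - 2*b*c*d)^2 := by
      rw [← mul_pow, mul_sub, mul_div_cancel₀ _ ha.ne']
    linear_combination (four_mul_prod_sub_sq_mul_prod a b c d - hsq) / 4 + hL2' - 4 * a^2 * hS2'
  exact ⟨key, key ▸ by positivity⟩

theorem stmt_4 (a b c d : ℝ) (ha : 0 < a) (hb : 0 < b) (hc : 0 < c) (hd : 0 < d)
    (L2' S2' : ℝ) (hL2' : L2' = (c*d - a*b) * (b*d - a*c) * (b*c - a*d))
    (hS2' : S2' = (1/16) * (a + b + c + d) * (a + b - c - d) * (a - b + c - d) * (-a + b + c - d)) :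
    L2' - 4 * a^2 * S2' = (a^2 / 4) * (-a^2 + b^2 + c^2 + d^2 - 2*b*c*d/a)^2 ∧
    0 ≤ L2' - 4 * a^2 * S2' :=
  stmt_4_general a b c d ha L2' S2' hL2' hS2'
end

section
/- Let a, b, c, d be positive reals with a ≥ b ≥ c ≥ d, a + d ≤ b + c, and a² + d² ≥ b² + c². Define r'_a = −a² + b² + c² + d² − 2bcd/a, r'_b = a² − b² + c² + d² − 2acd/b, r'_c = a² + b² − c² + d² − 2abd/c, r'_d = a² + b² + c² − d² − 2abc/d. Then r'_a ≤ 0, r'_b ≥ 0, r'_c ≥ 0, and r'_d ≤ 0. -/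
theorem stmt_10 (a b c d : ℝ) (ha : 0 < a) (hb : 0 < b) (hc : 0 < c) (hd : 0 < d)
    (hab : a ≥ b) (hbc : b ≥ c) (hcd : c ≥ d)
    (h1 : a + d ≤ b + c) (h2 : a^2 + d^2 ≥ b^2 + c^2) :
    (-a^2 + b^2 + c^2 + d^2 - 2*b*c*d/a ≤ 0) ∧
    (a^2 - b^2 + c^2 + d^2 - 2*a*c*d/b ≥ 0) ∧
    (a^2 + b^2 - c^2 + d^2 - 2*a*b*d/c ≥ 0) ∧
    (a^2 + b^2 + c^2 - d^2 - 2*a*b*c/d ≤ 0) := by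
  have hac : a ≥ c := le_trans hbc hab
  have hbd : b ≥ d := le_trans hcd hbc
  refine ⟨?_, ?_, ?_, ?_⟩
  · rw [sub_nonpos, le_div_iff₀ ha]
    nlinarith [mul_nonneg (sub_nonneg.2 hab) (sub_nonneg.2 hac),
      mul_le_mul_of_nonneg_left h2 ha.le, hd.le,
      mul_nonneg hd.le (sub_nonneg.2 (by nlinarith [mul_nonneg (sub_nonneg.2 hab) (sub_nonneg.2 hac)] : a*d ≤ b*c))]
  · rw [ge_iff_le, sub_nonneg, div_le_iff₀ hb]
    nlinarith [mul_nonneg hb.le (sq_nonneg (c - d)),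
      mul_nonneg (sub_nonneg.2 hab) (by nlinarith : (0:ℝ) ≤ b*(a+b) - 2*c*d)]
  · rw [ge_iff_le, sub_nonneg, div_le_iff₀ hc]
    nlinarith [sq_nonneg (c*a - b*d), mul_nonneg (sub_nonneg.2 (by nlinarith : c^2 ≤ b^2)) (sub_nonneg.2 (by nlinarith : d^2 ≤ c^2)), hc]
  · rw [sub_nonpos, le_div_iff₀ hd]
    nlinarith [mul_nonneg (sub_nonneg.2 hcd) (by nlinarith : (0:ℝ) ≤ 2*b^2 - d*(c+d)),
      mul_nonneg (mul_nonneg (sub_nonneg.2 hab) (sub_nonneg.2 hcd)) (by linarith : (0:ℝ) ≤ 2*b - d),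
      mul_nonneg (mul_nonneg hd.le (sub_nonneg.2 hab)) (by linarith : (0:ℝ) ≤ b + c - d - a)]
end

section
/- Let a ≥ b ≥ c ≥ d > 0 with 4abcd ≠ 0, and consider the 2×2 complex matrix A(z) = [[a z₀, b z₁],[c z₁, d z₀]] for z = (z₀,z₁) ∈ ℂ². Then det A(z) = ad z₀² − bc z₁², and the hyperdeterminant condition fails: there is no nonzero (x,y,z) ∈ ℂ²×ℂ²×ℂ² with a x₀y₀z₀ + b x₀y₁z₁ + c x₁y₀z₁ + d x₁y₁z₀ vanishing together with all its partial derivatives; equivalently λ = 0 is not a singular value of the hypermatrix with entries a₀₀₀=a, a₀₁₁=b, a₁₀₁=c, a₁₁₀=d. -/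
/-!
Each pair of partial derivatives of `α` with respect to one vector is a `2 × 2` linear system
with a nonzero solution, so its determinant vanishes: `a d z₀² = b c z₁²` (the system in `y`,
whose matrix is `A(z)`), `a c y₀² = b d y₁²` and `a b x₀² = c d x₁²`. Since `a, b, c, d ≠ 0`
and `x, y, z ≠ 0`, this forces `x₀, y₀, z₀ ≠ 0`. On the other hand, for the terms
`A = a x₀y₀z₀`, `B = b x₀y₁z₁`, `C = c x₁y₀z₁` of `α` the derivative equations give
`A + B = A + C = B + C = 0`, hence `A = 0`, a contradiction.
-/

open Matrix

theorem mul_eq_mul_of_linear_eqs {R : Type*} [CommRing R] [IsDomain R] {p q r s : R}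
    {u : Fin 2 → R} (hu : u ≠ 0) (h₀ : p * u 0 + q * u 1 = 0) (h₁ : r * u 0 + s * u 1 = 0) :
    p * s = q * r := by
  have hdet : !![p, q; r, s].det = 0 :=
    exists_mulVec_eq_zero_iff.mp ⟨u, hu, by
      ext i; fin_cases i <;> simp [mulVec, dotProduct, Fin.sum_univ_two, h₀, h₁]⟩
  rwa [det_fin_two_of, sub_eq_zero] at hdet

theorem apply_zero_ne_zero_of_mul_sq_eq {M₀ : Type*} [MonoidWithZero M₀] [NoZeroDivisors M₀]
    {α β : M₀} {u : Fin 2 → M₀} (hβ : β ≠ 0) (hu : u ≠ 0) (h : α * u 0 ^ 2 = β * u 1 ^ 2) :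
    u 0 ≠ 0 := by
  intro h₀
  have h₁ : u 1 = 0 := by
    simpa [h₀, hβ, eq_comm (a := (0 : M₀))] using h
  exact hu (funext fun i => by fin_cases i <;> assumption)

open Matrix in
theorem stmt_14_general (a b c d : ℝ) (ha : 0 < a) (hb : 0 < b) (hc : 0 < c) (hd : 0 < d) :
    (∀ z : Fin 2 → ℂ,
      (!![(a : ℂ) * z 0, (b : ℂ) * z 1; (c : ℂ) * z 1, (d : ℂ) * z 0]).det
        = (a : ℂ) * d * (z 0)^2 - (b : ℂ) * c * (z 1)^2) ∧
    ¬ ∃ (x y z : Fin 2 → ℂ), x ≠ 0 ∧ y ≠ 0 ∧ z ≠ 0 ∧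
      (a : ℂ) * x 0 * y 0 * z 0 + (b : ℂ) * x 0 * y 1 * z 1
        + (c : ℂ) * x 1 * y 0 * z 1 + (d : ℂ) * x 1 * y 1 * z 0 = 0 ∧
      -- ∂α/∂x₀ and ∂α/∂x₁
      (a : ℂ) * y 0 * z 0 + (b : ℂ) * y 1 * z 1 = 0 ∧
      (c : ℂ) * y 0 * z 1 + (d : ℂ) * y 1 * z 0 = 0 ∧
      -- ∂α/∂y₀ and ∂α/∂y₁
      (a : ℂ) * x 0 * z 0 + (c : ℂ) * x 1 * z 1 = 0 ∧
      (b : ℂ) * x 0 * z 1 + (d : ℂ) * x 1 * z 0 = 0 ∧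
      -- ∂α/∂z₀ and ∂α/∂z₁
      (a : ℂ) * x 0 * y 0 + (d : ℂ) * x 1 * y 1 = 0 ∧
      (b : ℂ) * x 0 * y 1 + (c : ℂ) * x 1 * y 0 = 0 := by
  have ha' : (a : ℂ) ≠ 0 := Complex.ofReal_ne_zero.mpr ha.ne'
  have hb' : (b : ℂ) ≠ 0 := Complex.ofReal_ne_zero.mpr hb.ne'
  have hc' : (c : ℂ) ≠ 0 := Complex.ofReal_ne_zero.mpr hc.ne'
  have hd' : (d : ℂ) ≠ 0 := Complex.ofReal_ne_zero.mpr hd.ne'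
  refine ⟨fun z => by rw [det_fin_two_of]; ring, ?_⟩
  rintro ⟨x, y, z, hx, hy, hz, -, e₁, e₂, e₃, e₄, e₅, e₆⟩
  have hz₀ : z 0 ≠ 0 := by
    refine apply_zero_ne_zero_of_mul_sq_eq (α := (a * d : ℂ)) (mul_ne_zero hb' hc') hz ?_
    linear_combination mul_eq_mul_of_linear_eqs (p := a * z 0) (q := b * z 1) (r := c * z 1)
      (s := d * z 0) hy (by linear_combination e₁) (by linear_combination e₂)
  have hy₀ : y 0 ≠ 0 := by
    refine apply_zero_ne_zero_of_mul_sq_eq (α := (a * c : ℂ)) (mul_ne_zero hb' hd') hy ?_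
    linear_combination mul_eq_mul_of_linear_eqs (r := d * y 1) (s := c * y 0) hz e₁
      (by linear_combination e₂)
  have hx₀ : x 0 ≠ 0 := by
    refine apply_zero_ne_zero_of_mul_sq_eq (α := (a * b : ℂ)) (mul_ne_zero hc' hd') hx ?_
    linear_combination mul_eq_mul_of_linear_eqs (r := c * x 1) (s := b * x 0) hy e₅
      (by linear_combination e₆)
  have hA : (a : ℂ) * x 0 * y 0 * z 0 = 0 := by
    linear_combination (x 0 * e₁ + y 0 * e₃ - z 1 * e₆) / 2
  exact mul_ne_zero (mul_ne_zero (mul_ne_zero ha' hx₀) hy₀) hz₀ hA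

open Matrix in
theorem stmt_14 (a b c d : ℝ) (ha : 0 < a) (hb : 0 < b) (hc : 0 < c) (hd : 0 < d)
    (hab : a ≥ b) (hbc : b ≥ c) (hcd : c ≥ d) :
    (∀ z : Fin 2 → ℂ,
      (!![(a : ℂ) * z 0, (b : ℂ) * z 1; (c : ℂ) * z 1, (d : ℂ) * z 0]).det
        = (a : ℂ) * d * (z 0)^2 - (b : ℂ) * c * (z 1)^2) ∧
    ¬ ∃ (x y z : Fin 2 → ℂ), x ≠ 0 ∧ y ≠ 0 ∧ z ≠ 0 ∧
      (a : ℂ) * x 0 * y 0 * z 0 + (b : ℂ) * x 0 * y 1 * z 1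
        + (c : ℂ) * x 1 * y 0 * z 1 + (d : ℂ) * x 1 * y 1 * z 0 = 0 ∧
      -- ∂α/∂x₀ and ∂α/∂x₁
      (a : ℂ) * y 0 * z 0 + (b : ℂ) * y 1 * z 1 = 0 ∧
      (c : ℂ) * y 0 * z 1 + (d : ℂ) * y 1 * z 0 = 0 ∧
      -- ∂α/∂y₀ and ∂α/∂y₁
      (a : ℂ) * x 0 * z 0 + (c : ℂ) * x 1 * z 1 = 0 ∧
      (b : ℂ) * x 0 * z 1 + (d : ℂ) * x 1 * z 0 = 0 ∧
      -- ∂α/∂z₀ and ∂α/∂z₁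
      (a : ℂ) * x 0 * y 0 + (d : ℂ) * x 1 * y 1 = 0 ∧
      (b : ℂ) * x 0 * y 1 + (c : ℂ) * x 1 * y 0 = 0 :=
  stmt_14_general a b c d ha hb hc hd
end

section
/- Let a, b, c, d be positive reals and λ real. With A(z) = [[a z₀, b z₁],[c z₁, d z₀]] for z ∈ ℂ², write det[A(z)†A(z) − λ²(|z₀|²+|z₁|²)I] = F z₀² + G z₀z₁ + H z₁² as a quadratic in z (with coefficients F, G, H depending on z̄). Then the z-discriminant D(z̄₀,z̄₁) = G² − 4FH is α z̄₀⁴ + γ z̄₀² z̄₁² + ε z̄₁⁴ with α = 4abcd(λ²−a²)(λ²−d²), ε = 4abcd(λ²−b²)(λ²−c²), and γ = (σ₁²−4σ₂)λ⁴ + 4σ₃λ² − 8σ₄, where σ_k is the k-th elementary symmetric polynomial in a², b², c², d². -/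
open Matrix in
theorem stmt_16 (a b c d lam : ℝ) (ha : 0 < a) (hb : 0 < b) (hc : 0 < c) (hd : 0 < d)
    (σ1 σ2 σ3 σ4 : ℝ)
    (hσ1 : σ1 = a^2 + b^2 + c^2 + d^2)
    (hσ2 : σ2 = a^2*b^2 + a^2*c^2 + a^2*d^2 + b^2*c^2 + b^2*d^2 + c^2*d^2)
    (hσ3 : σ3 = a^2*b^2*c^2 + a^2*b^2*d^2 + a^2*c^2*d^2 + b^2*c^2*d^2)
    (hσ4 : σ4 = a^2*b^2*c^2*d^2) :
    ∃ F20 F11 F02 G20 G11 G02 H20 H11 H02 : ℂ,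
      (∀ z0 z1 : ℂ,
        ((!![(a : ℂ) * z0, (b : ℂ) * z1; (c : ℂ) * z1, (d : ℂ) * z0])ᴴ *
            (!![(a : ℂ) * z0, (b : ℂ) * z1; (c : ℂ) * z1, (d : ℂ) * z0]) -
          (((lam^2 * (Complex.normSq z0 + Complex.normSq z1) : ℝ) : ℂ)) •
            (1 : Matrix (Fin 2) (Fin 2) ℂ)).det
        = (F20 * (starRingEnd ℂ z0)^2 + F11 * (starRingEnd ℂ z0) * (starRingEnd ℂ z1)
              + F02 * (starRingEnd ℂ z1)^2) * z0^2
          + (G20 * (starRingEnd ℂ z0)^2 + G11 * (starRingEnd ℂ z0) * (starRingEnd ℂ z1)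
              + G02 * (starRingEnd ℂ z1)^2) * z0 * z1
          + (H20 * (starRingEnd ℂ z0)^2 + H11 * (starRingEnd ℂ z0) * (starRingEnd ℂ z1)
              + H02 * (starRingEnd ℂ z1)^2) * z1^2) ∧
      (∀ w0 w1 : ℂ,
        (G20 * w0^2 + G11 * w0 * w1 + G02 * w1^2)^2
          - 4 * (F20 * w0^2 + F11 * w0 * w1 + F02 * w1^2)
              * (H20 * w0^2 + H11 * w0 * w1 + H02 * w1^2)
        = ((4*a*b*c*d * (lam^2 - a^2) * (lam^2 - d^2) : ℝ) : ℂ) * w0^4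
          + (((σ1^2 - 4*σ2) * lam^4 + 4*σ3 * lam^2 - 8*σ4 : ℝ) : ℂ) * w0^2 * w1^2
          + ((4*a*b*c*d * (lam^2 - b^2) * (lam^2 - c^2) : ℝ) : ℂ) * w1^4) := by
  refine ⟨(((a^2 - lam^2)*(d^2 - lam^2) : ℝ) : ℂ), 0, ((-(a*b*c*d) : ℝ) : ℂ),
    0, ((2*lam^4 - (a^2+b^2+c^2+d^2)*lam^2 : ℝ) : ℂ), 0,
    ((-(a*b*c*d) : ℝ) : ℂ), 0, (((b^2 - lam^2)*(c^2 - lam^2) : ℝ) : ℂ), ?_, ?_⟩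
  · intro z0 z1
    simp only [Matrix.det_fin_two, Matrix.sub_apply, Matrix.mul_apply,
      Matrix.conjTranspose_apply, Fin.sum_univ_two, Matrix.smul_apply,
      Matrix.one_apply, Matrix.cons_val', Matrix.cons_val_zero, Matrix.cons_val_one,
      Matrix.head_cons, Matrix.empty_val', Matrix.cons_val_fin_one, Matrix.head_fin_const,
      Matrix.of_apply, if_true, if_false, smul_eq_mul, _root_.map_mul, Complex.conj_ofReal]
    have h0 : ((Complex.normSq z0 : ℝ) : ℂ) = (starRingEnd ℂ z0) * z0 := by
      rw [Complex.normSq_eq_conj_mul_self]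
    have h1 : ((Complex.normSq z1 : ℝ) : ℂ) = (starRingEnd ℂ z1) * z1 := by
      rw [Complex.normSq_eq_conj_mul_self]
    push_cast [h0, h1]
    norm_num
    ring
  · intro w0 w1
    subst hσ1 hσ2 hσ3 hσ4
    push_cast
    ring
end

section
/- Let a ≥ b ≥ c ≥ d > 0 with r_a := −a² + b² + c² + d² + 2bcd/a ≥ 0. Then a ≤ b + c + d (so S² ≥ 0) and hence the quadrilateral condition holds; moreover then D = L/(2S) satisfies D ≥ a. -/
theorem stmt_19 (a b c d : ℝ) (ha : 0 < a) (hb : 0 < b) (hc : 0 < c) (hd : 0 < d)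
    (hab : a ≥ b) (hbc : b ≥ c) (hcd : c ≥ d)
    (s S2 L2 : ℝ)
    (hs : s = (a + b + c + d) / 2)
    (hS2 : S2 = (s - a) * (s - b) * (s - c) * (s - d))
    (hL2 : L2 = (a*b + c*d) * (a*c + b*d) * (a*d + b*c))
    (hra : -a^2 + b^2 + c^2 + d^2 + 2*b*c*d/a ≥ 0) :
    a ≤ b + c + d ∧ 0 ≤ S2 ∧ Real.sqrt L2 / (2 * Real.sqrt S2) ≥ a := by
  have hane : a ≠ 0 := ne_of_gt ha
  have hrap : 0 ≤ -a^3 + a*(b^2+c^2+d^2) + 2*b*c*d := by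
    have := mul_le_mul_of_nonneg_left hra (le_of_lt ha)
    rw [mul_zero] at this
    calc (0:ℝ) ≤ a * (-a^2 + b^2 + c^2 + d^2 + 2*b*c*d/a) := this
      _ = -a^3 + a*(b^2+c^2+d^2) + 2*b*c*d := by field_simp; ring
  have h1 : a < b + c + d := by
    by_contra h
    push_neg at h
    have hda : 0 < a - d := by linarith
    nlinarith [mul_nonneg (mul_nonneg ha.le (sub_nonneg.2 h)) (by linarith : (0:ℝ) ≤ a + b + c + d),
      mul_pos (mul_pos hb hc) hda, mul_pos (mul_pos hb hd) ha, mul_pos (mul_pos hc hd) ha]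
  have hS2pos : 0 < S2 := by
    rw [hS2, hs]
    have : 0 < (a + b + c + d)/2 - a := by linarith
    have h2 : 0 < (a + b + c + d)/2 - b := by linarith
    have h3 : 0 < (a + b + c + d)/2 - c := by linarith
    have h4 : 0 < (a + b + c + d)/2 - d := by linarith
    positivity
  refine ⟨le_of_lt h1, le_of_lt hS2pos, ?_⟩
  have hsq : 0 < Real.sqrt S2 := Real.sqrt_pos.mpr hS2pos
  rw [ge_iff_le, le_div_iff₀ (by positivity)]
  have hL2nn : 0 ≤ L2 := by
    rw [hL2]; positivity
  rw [show a * (2 * Real.sqrt S2) = 2 * a * Real.sqrt S2 by ring]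
  have h2a : 0 ≤ 2 * a * Real.sqrt S2 := by positivity
  rw [← Real.sqrt_sq h2a]
  apply Real.sqrt_le_sqrt
  have hss : (Real.sqrt S2)^2 = S2 := Real.sq_sqrt (le_of_lt hS2pos)
  have key : L2 - 4*a^2*S2 = (-a^3 + a*(b^2+c^2+d^2) + 2*b*c*d)^2 / 4 := by
    rw [hL2, hS2, hs]; ring
  nlinarith [sq_nonneg (-a^3 + a*(b^2+c^2+d^2) + 2*b*c*d), hss]
end
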